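/- Let Θ be a Young function and set θ(t) := Θ⁻¹(t^{-n}) for t > 0. Then the weak Orlicz–Morrey space wM_{θ,Θ}(ℝⁿ) coincides with the weak Orlicz space wL_Θ(ℝⁿ), with equivalent quasi-norms; i.e., there are constants c, C > 0 with c‖f‖_{wL_Θ(ℝⁿ)} ≤ ‖f‖_{wM_{θ,Θ}(ℝⁿ)} ≤ C‖f‖_{wL_Θ(ℝⁿ)} for all measurable f. -/

import Mathlib

open MeasureTheory Metric Set ENNReal

noncomputable section

/-- A Young function: convex, continuous, vanishing at 0, nonnegative, tending to ∞. -/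
def IsYoung (Θ : ℝ → ℝ) : Prop :=
  ConvexOn ℝ (Set.Ici 0) Θ ∧ ContinuousOn Θ (Set.Ici 0) ∧ Θ 0 = 0 ∧
  (∀ t, 0 ≤ t → 0 ≤ Θ t) ∧ Filter.Tendsto Θ Filter.atTop Filter.atTop

/-- Generalized inverse Θ⁻¹(s) = inf {r ≥ 0 : Θ r > s}. -/
def invY (Θ : ℝ → ℝ) (s : ℝ) : ℝ := sInf {r : ℝ | 0 ≤ r ∧ s < Θ r}

abbrev En (n : ℕ) := EuclideanSpace ℝ (Fin n)

/-- Luxemburg norm on a set B. -/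
def luxNorm {n : ℕ} (Θ : ℝ → ℝ) (B : Set (En n)) (f : En n → ℝ) : ℝ≥0∞ :=
  sInf {e : ℝ≥0∞ | ∃ b : ℝ, 0 < b ∧ e = ENNReal.ofReal b ∧
    ∫⁻ x in B, ENNReal.ofReal (Θ (|f x| / b)) ∂volume ≤ 1}

/-- Weak Luxemburg quasi-norm on a set B. -/
def wLuxNorm {n : ℕ} (Θ : ℝ → ℝ) (B : Set (En n)) (f : En n → ℝ) : ℝ≥0∞ :=
  sInf {e : ℝ≥0∞ | ∃ b : ℝ, 0 < b ∧ e = ENNReal.ofReal b ∧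
    ∀ t : ℝ, 0 < t → ENNReal.ofReal (Θ t) * volume {x ∈ B | t < |f x| / b} ≤ 1}

/-- Orlicz–Morrey norm (Deringoz–Guliyev–Samko). -/
def morreyNorm (n : ℕ) (θ Θ : ℝ → ℝ) (f : En n → ℝ) : ℝ≥0∞ :=
  ⨆ (a : En n) (r : ℝ) (_ : 0 < r),
    ENNReal.ofReal ((1 / θ ((volume (ball a r)).toReal ^ ((1:ℝ)/n))) *
      invY Θ (1 / (volume (ball a r)).toReal)) * luxNorm Θ (ball a r) f

/-- Weak Orlicz–Morrey quasi-norm. -/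
def wMorreyNorm (n : ℕ) (θ Θ : ℝ → ℝ) (f : En n → ℝ) : ℝ≥0∞ :=
  ⨆ (a : En n) (r : ℝ) (_ : 0 < r),
    ENNReal.ofReal ((1 / θ ((volume (ball a r)).toReal ^ ((1:ℝ)/n))) *
      invY Θ (1 / (volume (ball a r)).toReal)) * wLuxNorm Θ (ball a r) f

/-- The class G_θ : θ positive and decreasing, with t ↦ Θ⁻¹(t^{-n})/θ(t) almost decreasing. -/
def Gclass (n : ℕ) (Θ θ : ℝ → ℝ) : Prop :=
  (∀ t : ℝ, 0 < t → 0 < θ t) ∧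
  (∀ s t : ℝ, 0 < s → s ≤ t → θ t ≤ θ s) ∧
  ∃ C : ℝ, 0 < C ∧ ∀ s t : ℝ, 0 < s → s ≤ t →
    invY Θ (t ^ (-(n:ℝ))) / θ t ≤ C * (invY Θ (s ^ (-(n:ℝ))) / θ s)

/-- Θ₁ ≺ Θ₂. -/
def prec (Θ₁ Θ₂ : ℝ → ℝ) : Prop := ∃ C : ℝ, 0 < C ∧ ∀ t : ℝ, 0 < t → Θ₁ t ≤ Θ₂ (C * t)

/-- Θ₁⁻¹ ≲ Θ₂⁻¹. -/
def invLesssim (Θ₁ Θ₂ : ℝ → ℝ) : Prop :=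
  ∃ C : ℝ, 0 < C ∧ ∀ t : ℝ, 0 < t → invY Θ₁ t ≤ C * invY Θ₂ t

/-!
The weight of the Morrey quasi-norm is identically one: for a ball of measure `v`,
`θ(v^{1/n}) = Θ⁻¹(1/v)`, and `Θ⁻¹(1/v) > 0` because `Θ` is continuous at `0` with `Θ 0 = 0`.
So `‖f‖_{wM}` is the supremum of `‖f‖_{wL_Θ(B)}` over balls `B`, which is `‖f‖_{wL_Θ(ℝⁿ)}`:
the weak modular condition is preserved under increasing unions by continuity of the measure
from below.
-/

lemma invY_pos_of_continuousWithinAt {Θ : ℝ → ℝ} (hcont : ContinuousWithinAt Θ (Ici 0) 0)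
    (h0 : Θ 0 = 0) {s : ℝ} (hs : 0 < s) (hbdd : ∃ r, 0 ≤ r ∧ s < Θ r) : 0 < invY Θ s := by
  obtain ⟨δ, hδ, hsmall⟩ := Metric.continuousWithinAt_iff.mp hcont s hs
  refine hδ.trans_le (le_csInf hbdd ?_)
  rintro r ⟨hr, hsr⟩
  by_contra! hrδ
  have hΘr := hsmall (mem_Ici.mpr hr) (by rwa [Real.dist_0_eq_abs, abs_of_nonneg hr])
  rw [Real.dist_eq, h0, sub_zero] at hΘr
  linarith [le_abs_self (Θ r)]

lemma IsYoung.invY_pos {Θ : ℝ → ℝ} (hΘ : IsYoung Θ) {s : ℝ} (hs : 0 < s) : 0 < invY Θ s := by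
  obtain ⟨-, hcont, h0, -, htop⟩ := hΘ
  refine invY_pos_of_continuousWithinAt (hcont 0 self_mem_Ici) h0 hs ?_
  obtain ⟨r, hsr, hr⟩ := ((htop.eventually_gt_atTop s).and (Filter.eventually_ge_atTop 0)).exists
  exact ⟨r, hr, hsr⟩

section WeakLuxemburg

variable {n : ℕ} (Θ : ℝ → ℝ)

def IsWeakLuxBound (B : Set (En n)) (f : En n → ℝ) (b : ℝ) : Prop :=
  ∀ t : ℝ, 0 < t → ENNReal.ofReal (Θ t) * volume {x ∈ B | t < |f x| / b} ≤ 1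

variable {Θ}

lemma IsWeakLuxBound.mono_set {B B' : Set (En n)} {f : En n → ℝ} {b : ℝ}
    (h : IsWeakLuxBound Θ B' f b) (hB : B ⊆ B') : IsWeakLuxBound Θ B f b := by
  refine fun t ht => (mul_le_mul_right (measure_mono ?_) _).trans (h t ht)
  exact fun x hx => ⟨hB hx.1, hx.2⟩

lemma IsWeakLuxBound.mono {B : Set (En n)} {f : En n → ℝ} {b b' : ℝ}
    (h : IsWeakLuxBound Θ B f b) (hb : 0 < b) (hbb' : b ≤ b') : IsWeakLuxBound Θ B f b' := by
  refine fun t ht => (mul_le_mul_right (measure_mono ?_) _).trans (h t ht)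
  rintro x ⟨hx, hxt⟩
  exact ⟨hx, hxt.trans_le (by gcongr)⟩

lemma IsWeakLuxBound.iUnion {ι : Type*} [Preorder ι] [IsDirectedOrder ι]
    [Filter.atTop (α := ι).IsCountablyGenerated] {B : ι → Set (En n)} (hB : Monotone B)
    {f : En n → ℝ} {b : ℝ} (h : ∀ i, IsWeakLuxBound Θ (B i) f b) :
    IsWeakLuxBound Θ (⋃ i, B i) f b := by
  intro t ht
  have hlevel : {x ∈ ⋃ i, B i | t < |f x| / b} = ⋃ i, {x ∈ B i | t < |f x| / b} := by
    ext x
    simp only [mem_ofPred_eq, mem_iUnion, exists_and_right]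
  have hmono : Monotone fun i => {x ∈ B i | t < |f x| / b} :=
    fun i j hij _ hx => ⟨hB hij hx.1, hx.2⟩
  rw [hlevel, hmono.measure_iUnion, ENNReal.mul_iSup]
  exact iSup_le fun i => h i t ht

lemma wLuxNorm_le_ofReal {B : Set (En n)} {f : En n → ℝ} {b : ℝ} (hb : 0 < b)
    (h : IsWeakLuxBound Θ B f b) : wLuxNorm Θ B f ≤ ENNReal.ofReal b :=
  sInf_le ⟨b, hb, rfl, h⟩

lemma isWeakLuxBound_of_wLuxNorm_lt {B : Set (En n)} {f : En n → ℝ} {b : ℝ} (hb : 0 < b)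
    (h : wLuxNorm Θ B f < ENNReal.ofReal b) : IsWeakLuxBound Θ B f b := by
  obtain ⟨-, ⟨b', hb', rfl, hb'bound⟩, hlt⟩ := sInf_lt_iff.mp h
  exact IsWeakLuxBound.mono hb'bound hb' ((ENNReal.ofReal_lt_ofReal_iff hb).mp hlt).le

lemma wLuxNorm_le_of_forall_lt {B : Set (En n)} {f : En n → ℝ} {M : ℝ≥0∞}
    (h : ∀ b : ℝ, 0 < b → M < ENNReal.ofReal b → IsWeakLuxBound Θ B f b) :
    wLuxNorm Θ B f ≤ M := by
  refine le_of_forall_gt_imp_ge_of_dense fun c hMc => ?_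
  rcases eq_or_ne c ⊤ with rfl | hc
  · exact le_top
  have hb : 0 < c.toReal := ENNReal.toReal_pos (pos_of_gt hMc).ne' hc
  rw [← ENNReal.ofReal_toReal hc] at hMc ⊢
  exact wLuxNorm_le_ofReal hb (h _ hb hMc)

lemma wLuxNorm_mono_set {B B' : Set (En n)} (hB : B ⊆ B') (f : En n → ℝ) :
    wLuxNorm Θ B f ≤ wLuxNorm Θ B' f :=
  sInf_le_sInf fun _ ⟨b, hb, he, h⟩ => ⟨b, hb, he, IsWeakLuxBound.mono_set h hB⟩

lemma wLuxNorm_iUnion {ι : Type*} [Preorder ι] [IsDirectedOrder ι]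
    [Filter.atTop (α := ι).IsCountablyGenerated] {B : ι → Set (En n)} (hB : Monotone B)
    (f : En n → ℝ) : wLuxNorm Θ (⋃ i, B i) f = ⨆ i, wLuxNorm Θ (B i) f := by
  refine le_antisymm (wLuxNorm_le_of_forall_lt fun b hb hlt => ?_)
    (iSup_le fun i => wLuxNorm_mono_set (subset_iUnion B i) f)
  exact IsWeakLuxBound.iUnion hB fun i =>
    isWeakLuxBound_of_wLuxNorm_lt hb ((le_iSup _ i).trans_lt hlt)

lemma iSup_ball_wLuxNorm (f : En n → ℝ) :
    ⨆ (a : En n) (r : ℝ) (_ : 0 < r), wLuxNorm Θ (ball a r) f = wLuxNorm Θ univ f := by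
  refine le_antisymm (iSup₂_le fun a r => iSup_le fun _ => wLuxNorm_mono_set (subset_univ _) f) ?_
  have hballs : Monotone fun k : ℕ => ball (0 : En n) (k + 1) :=
    fun i j hij => ball_subset_ball (by gcongr)
  rw [← iUnion_ball_nat_succ (0 : En n), wLuxNorm_iUnion hballs]
  exact iSup_le fun k =>
    le_iSup₂_of_le (0 : En n) ((k : ℝ) + 1) (le_iSup_of_le (by positivity) le_rfl)

end WeakLuxemburg

lemma rpow_one_div_rpow_neg {v : ℝ} (hv : 0 < v) {n : ℝ} (hn : n ≠ 0) :
    (v ^ (1 / n)) ^ (-n) = 1 / v := by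
  rw [← Real.rpow_mul hv.le, one_div_mul_eq_div, neg_div, div_self hn, Real.rpow_neg_one, one_div]

lemma wMorreyNorm_invY_eq_wLuxNorm {n : ℕ} (hn : 0 < n) {Θ : ℝ → ℝ} (hΘ : IsYoung Θ)
    (f : En n → ℝ) :
    wMorreyNorm n (fun t => invY Θ (t ^ (-(n:ℝ)))) Θ f = wLuxNorm Θ univ f := by
  rw [← iSup_ball_wLuxNorm, wMorreyNorm]
  refine iSup_congr fun a => iSup_congr fun r => iSup_congr fun hr => ?_
  have hv : 0 < (volume (ball a r)).toReal :=
    ENNReal.toReal_pos (measure_ball_pos volume a hr).ne' measure_ball_lt_top.ne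
  rw [rpow_one_div_rpow_neg hv (Nat.cast_ne_zero.mpr hn.ne'),
    one_div_mul_cancel (hΘ.invY_pos (one_div_pos.mpr hv)).ne', ENNReal.ofReal_one, one_mul]

theorem stmt13 (n : ℕ) (hn : 0 < n) (Θ : ℝ → ℝ) (hΘ : IsYoung Θ) :
    ∃ c C : ℝ, 0 < c ∧ 0 < C ∧ ∀ f : En n → ℝ, Measurable f →
      ENNReal.ofReal c * wLuxNorm Θ (Set.univ : Set (En n)) f ≤
        wMorreyNorm n (fun t => invY Θ (t ^ (-(n:ℝ)))) Θ f ∧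
      wMorreyNorm n (fun t => invY Θ (t ^ (-(n:ℝ)))) Θ f ≤
        ENNReal.ofReal C * wLuxNorm Θ (Set.univ : Set (En n)) f := by
  refine ⟨1, 1, one_pos, one_pos, fun f _ => ?_⟩
  rw [wMorreyNorm_invY_eq_wLuxNorm hn hΘ f, ENNReal.ofReal_one, one_mul]
  exact ⟨le_rfl, le_rfl⟩
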